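/- Suppose R_n : [0,T] → ℝ≥0 are bounded measurable functions, non-increasing in n pointwise, satisfying R_n(t) ≤ ε_n + 6 ∫_0^t G(R_n(s)) ds for all t ∈ [0,T], where ε_n → 0 and G : ℝ≥0 → ℝ≥0 is continuous, non-decreasing, concave, G(0) = 0, and ∫_{0+} dz/G(z) = ∞. Then R_n(t) → 0 for every t ∈ [0,T]. -/

import Mathlib

/-!
Let `Q = lim Rₙ = inf Rₙ`. Dominated convergence turns the hypothesis into
`Q(t) ≤ 6 ∫₀ᵗ G(Q)`, so `v(t) = 6 ∫₀ᵗ G(Q)` is continuous, non-decreasing, vanishes at `0`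
and satisfies `v(t) - v(s) ≤ 6 (t - s) G(v(t))`. If `v(t₀) > 0`, let `τ` be the last zero of
`v` before `t₀`. On `[a, t₀]` with `a > τ` the right Dini derivative of
`t ↦ ∫_{v(a)}^{v(t)} dz / G(z)` is at most `6`, hence `∫_{v(a)}^{v(t₀)} dz / G(z) ≤ 6 (t₀ - a)`;
letting `a ↓ τ` sends `v(a) ↓ 0`, against the Osgood condition. So `v = 0`, hence `Q = 0`.
-/

open MeasureTheory intervalIntegral Set Filter Topology

def OsgoodCondition (G : ℝ → ℝ) : Prop :=
  ∀ η : ℝ, 0 < η → Tendsto (fun δ : ℝ => ∫ z in δ..η, 1 / G z) (𝓝[>] 0) atTop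

section Osgood

variable {G : ℝ → ℝ}

theorem OsgoodCondition.pos (hOsgood : OsgoodCondition G) (hG_mono : MonotoneOn G (Ici 0))
    {p : ℝ} (hp : 0 < p) : 0 < G p := by
  by_contra! hGp
  have hint_nonpos : ∀ δ ∈ Ioo 0 p, ∫ z in δ..p, 1 / G z ≤ 0 := by
    intro δ hδ
    have : 0 ≤ ∫ z in δ..p, -(1 / G z) :=
      integral_nonneg hδ.2.le fun z hz => neg_nonneg.2 <| one_div_nonpos.2 <|
        (hG_mono (hδ.1.le.trans hz.1) hp.le hz.2).trans hGp
    simpa only [intervalIntegral.integral_neg, neg_nonneg] using this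
  obtain ⟨δ, hpos, hδ⟩ :=
    (((hOsgood p hp).eventually (eventually_gt_atTop 0)).and (Ioo_mem_nhdsGT hp)).exists
  exact (hint_nonpos δ hδ).not_gt hpos

variable (hG_cont : Continuous G) (hG_mono : MonotoneOn G (Ici 0))
include hG_cont hG_mono

theorem continuousOn_one_div_Ici {p : ℝ} (hp : 0 ≤ p) (hGp : 0 < G p) :
    ContinuousOn (fun z => 1 / G z) (Ici p) :=
  continuousOn_const.div hG_cont.continuousOn fun _ hz =>
    (hGp.trans_le (hG_mono hp (hp.trans hz) hz)).ne'

theorem intervalIntegrable_one_div {c p q : ℝ} (hc : 0 ≤ c) (hGc : 0 < G c) (hp : c ≤ p)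
    (hq : c ≤ q) : IntervalIntegrable (fun z => 1 / G z) volume p q :=
  ((continuousOn_one_div_Ici hG_cont hG_mono hc hGc).mono
    fun _ hz => (le_min hp hq).trans hz.1).intervalIntegrable

theorem integral_one_div_le_of_sub_le {p q K : ℝ} (hp : 0 ≤ p) (hGp : 0 < G p) (hpq : p ≤ q)
    (hqp : q - p ≤ K * G q) : ∫ z in p..q, 1 / G z ≤ K * G q / G p := by
  have h := integral_mono_on hpq
    (intervalIntegrable_one_div hG_cont hG_mono hp hGp le_rfl hpq) intervalIntegrable_const
    fun z hz => one_div_le_one_div_of_le hGp (hG_mono hp (hp.trans hz.1) hz.1)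
  rw [intervalIntegral.integral_const, smul_eq_mul, mul_one_div] at h
  exact h.trans (div_le_div_of_nonneg_right hqp hGp.le)

theorem integral_one_div_le_mul_sub {v : ℝ → ℝ} {a b C : ℝ} (hab : a ≤ b) (hva : 0 ≤ v a)
    (hGva : 0 < G (v a)) (hv_cont : ContinuousOn v (Icc a b))
    (hv_mono : MonotoneOn v (Icc a b))
    (hv_growth : ∀ s ∈ Icc a b, ∀ t ∈ Icc a b, s ≤ t → v t - v s ≤ C * (t - s) * G (v t)) :
    ∫ z in v a..v b, 1 / G z ≤ C * (b - a) := by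
  have ha : a ∈ Icc a b := left_mem_Icc.2 hab
  have hb : b ∈ Icc a b := right_mem_Icc.2 hab
  have hv_ge : ∀ t ∈ Icc a b, v a ≤ v t := fun t ht => hv_mono ha ht ht.1
  have hint : ∀ t ∈ Icc a b, IntervalIntegrable (fun z => 1 / G z) volume (v a) (v t) :=
    fun t ht => intervalIntegrable_one_div hG_cont hG_mono hva hGva le_rfl (hv_ge t ht)
  refine image_le_of_liminf_slope_right_le_deriv_boundary
    (f := fun t => ∫ z in v a..v t, 1 / G z) (B := fun t => C * (t - a)) (B' := fun _ => C)
    ?_ (by simp) (by fun_prop) (fun x _ => ?_) ?_ hb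
  · refine (continuousOn_primitive_interval' (hint b hb) left_mem_uIcc).comp hv_cont
      fun t ht => ?_
    rw [uIcc_of_le (hv_ge b hb)]
    exact ⟨hv_ge t ht, hv_mono ht hb ht.2⟩
  · simpa using (((hasDerivAt_id x).sub_const a).const_mul C).hasDerivWithinAt
  intro x hx r hr
  have hxab : x ∈ Icc a b := Ico_subset_Icc_self hx
  have hGvx : 0 < G (v x) := hGva.trans_le (hG_mono hva (hva.trans (hv_ge x hxab)) (hv_ge x hxab))
  have hratio : Tendsto (fun z => C * G (v z) / G (v x)) (𝓝[>] x) (𝓝 (C * G (v x) / G (v x))) :=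
    ((hG_cont.continuousAt.comp_continuousWithinAt (hv_cont x hxab)).mono_of_mem_nhdsWithin
      (Icc_mem_nhdsGT_of_mem hx)).const_mul C |>.div_const _
  rw [mul_div_cancel_right₀ C hGvx.ne'] at hratio
  refine Eventually.frequently ?_
  filter_upwards [hratio.eventually (gt_mem_nhds hr), Ioc_mem_nhdsGT hx.2] with z hzr hz
  have hzab : z ∈ Icc a b := ⟨hx.1.trans hz.1.le, hz.2⟩
  have hxz : 0 < z - x := sub_pos.2 hz.1
  rw [slope_def_field, div_lt_iff₀ hxz, integral_interval_sub_left (hint z hzab) (hint x hxab)]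
  calc ∫ w in v x..v z, 1 / G w
      ≤ C * (z - x) * G (v z) / G (v x) :=
        integral_one_div_le_of_sub_le hG_cont hG_mono (hva.trans (hv_ge x hxab)) hGvx
          (hv_mono hxab hzab hz.1.le) (hv_growth x hxab z hzab hz.1.le)
    _ = (z - x) * (C * G (v z) / G (v x)) := by ring
    _ < (z - x) * r := mul_lt_mul_of_pos_left hzr hxz
    _ = r * (z - x) := mul_comm _ _

theorem eqOn_zero_of_sub_le_mul (hOsgood : OsgoodCondition G) {v : ℝ → ℝ} {C T : ℝ}
    (hv_cont : ContinuousOn v (Icc 0 T)) (hv_mono : MonotoneOn v (Icc 0 T)) (hv0 : v 0 = 0)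
    (hv_growth : ∀ s ∈ Icc 0 T, ∀ t ∈ Icc 0 T, s ≤ t → v t - v s ≤ C * (t - s) * G (v t)) :
    EqOn v 0 (Icc 0 T) := by
  intro t₀ ht₀
  have h0 : (0 : ℝ) ∈ Icc 0 T := ⟨le_rfl, ht₀.1.trans ht₀.2⟩
  have hv_nonneg : ∀ t ∈ Icc 0 T, 0 ≤ v t := fun t ht => hv0 ▸ hv_mono h0 ht ht.1
  by_contra hne
  have hvt₀ : 0 < v t₀ := (hv_nonneg t₀ ht₀).lt_of_ne' hne
  set S := Icc 0 t₀ ∩ v ⁻¹' {0}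
  have hS_closed : IsClosed S :=
    (hv_cont.mono (Icc_subset_Icc_right ht₀.2)).preimage_isClosed_of_isClosed isClosed_Icc
      isClosed_singleton
  have hS_bdd : BddAbove S := ⟨t₀, fun s hs => hs.1.2⟩
  obtain ⟨⟨hτ0, hτt₀⟩, hvτ⟩ : sSup S ∈ S := hS_closed.csSup_mem ⟨0, ⟨le_rfl, ht₀.1⟩, hv0⟩ hS_bdd
  set τ := sSup S
  have hτ_lt : τ < t₀ := hτt₀.lt_of_ne fun h => hne (h ▸ hvτ)
  have hsub : ∀ a ∈ Ioc τ t₀, Icc a t₀ ⊆ Icc 0 T := fun a ha =>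
    Icc_subset_Icc (hτ0.trans ha.1.le) ht₀.2
  have hv_pos : ∀ a ∈ Ioc τ t₀, 0 < v a := fun a ha =>
    (hv_nonneg a (hsub a ha (left_mem_Icc.2 ha.2))).lt_of_ne' fun h =>
      (le_csSup hS_bdd ⟨⟨hτ0.trans ha.1.le, ha.2⟩, h⟩).not_gt ha.1
  have hv_tendsto : Tendsto v (𝓝[>] τ) (𝓝[>] 0) := by
    refine tendsto_nhdsWithin_of_tendsto_nhds_of_eventually_within _ ?_
      (mem_of_superset (Ioc_mem_nhdsGT hτ_lt) hv_pos)
    have := (hv_cont τ ⟨hτ0, hτt₀.trans ht₀.2⟩).mono_of_mem_nhdsWithin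
      (Icc_mem_nhdsGT_of_mem ⟨hτ0, hτ_lt.trans_le ht₀.2⟩) |>.tendsto
    rwa [show v τ = 0 from hvτ] at this
  have hbound : ∀ᶠ a in 𝓝[>] τ, ∫ z in v a..v t₀, 1 / G z ≤ C * (t₀ - a) :=
    mem_of_superset (Ioc_mem_nhdsGT hτ_lt) fun a ha =>
      integral_one_div_le_mul_sub hG_cont hG_mono ha.2 (hv_pos a ha).le
        (hOsgood.pos hG_mono (hv_pos a ha)) (hv_cont.mono (hsub a ha))
        (hv_mono.mono (hsub a ha)) fun s hs t ht => hv_growth s (hsub a ha hs) t (hsub a ha ht)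
  have hlin : Tendsto (fun a => C * (t₀ - a)) (𝓝[>] τ) (𝓝 (C * (t₀ - τ))) :=
    ((continuous_const.mul (continuous_const.sub continuous_id)).tendsto τ).mono_left
      nhdsWithin_le_nhds
  exact not_tendsto_atTop_of_tendsto_nhds hlin
    (tendsto_atTop_mono' _ hbound ((hOsgood _ hvt₀).comp hv_tendsto))

theorem eqOn_zero_of_le_mul_integral (hG_nonneg : ∀ x, 0 ≤ x → 0 ≤ G x)
    (hOsgood : OsgoodCondition G) {u : ℝ → ℝ} {C T : ℝ} (hC : 0 ≤ C)
    (hu_nonneg : ∀ t ∈ Icc 0 T, 0 ≤ u t) (hGu : IntegrableOn (fun s => G (u s)) (Icc 0 T))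
    (hu : ∀ t ∈ Icc 0 T, u t ≤ C * ∫ s in 0..t, G (u s)) :
    EqOn u 0 (Icc 0 T) := by
  intro t ht
  have hT : 0 ≤ T := ht.1.trans ht.2
  have h0 : (0 : ℝ) ∈ Icc 0 T := ⟨le_rfl, hT⟩
  set v : ℝ → ℝ := fun t => C * ∫ s in 0..t, G (u s)
  have hint : ∀ s ∈ Icc 0 T, ∀ t ∈ Icc 0 T, IntervalIntegrable (fun s => G (u s)) volume s t :=
    fun s hs t ht => (hGu.mono_set (uIcc_subset_Icc hs ht)).intervalIntegrable
  have hv_sub : ∀ s ∈ Icc 0 T, ∀ t ∈ Icc 0 T, v t - v s = C * ∫ σ in s..t, G (u σ) :=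
    fun s hs t ht => by
      simp only [v, ← mul_sub, integral_interval_sub_left (hint 0 h0 t ht) (hint 0 h0 s hs)]
  have hv_mono : MonotoneOn v (Icc 0 T) := fun s hs t ht hst => by
    refine sub_nonneg.1 (hv_sub s hs t ht ▸ mul_nonneg hC (integral_nonneg hst fun σ hσ => ?_))
    exact hG_nonneg _ (hu_nonneg σ ⟨hs.1.trans hσ.1, hσ.2.trans ht.2⟩)
  have hv_cont : ContinuousOn v (Icc 0 T) := by
    have := continuousOn_primitive_interval (μ := volume) (a := 0) (b := T)
      (f := fun s => G (u s)) (by rwa [uIcc_of_le hT])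
    rw [uIcc_of_le hT] at this
    exact continuousOn_const.mul this
  have hv_growth : ∀ s ∈ Icc 0 T, ∀ t ∈ Icc 0 T, s ≤ t → v t - v s ≤ C * (t - s) * G (v t) := by
    intro s hs t ht hst
    have hsub : Icc s t ⊆ Icc 0 T := Icc_subset_Icc hs.1 ht.2
    have hvt : 0 ≤ v t := (hu_nonneg t ht).trans (hu t ht)
    rw [hv_sub s hs t ht, mul_assoc]
    gcongr
    calc ∫ σ in s..t, G (u σ)
        ≤ ∫ _ in s..t, G (v t) := integral_mono_on hst (hint s hs t ht) intervalIntegrable_const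
          fun σ hσ => hG_mono (hu_nonneg σ (hsub hσ)) hvt
            ((hu σ (hsub hσ)).trans (hv_mono (hsub hσ) ht hσ.2))
      _ = (t - s) * G (v t) := by simp only [intervalIntegral.integral_const, smul_eq_mul]
  have hv_zero := eqOn_zero_of_sub_le_mul hG_cont hG_mono hOsgood hv_cont hv_mono
    (by simp [v]) hv_growth
  exact le_antisymm ((hu t ht).trans (hv_zero ht).le) (hu_nonneg t ht)

theorem le_mul_integral_of_tendsto (hG_nonneg : ∀ x, 0 ≤ x → 0 ≤ G x)
    {R : ℕ → ℝ → ℝ} {Q : ℝ → ℝ} {ε : ℕ → ℝ} {C M T : ℝ} (hR_meas : ∀ n, Measurable (R n))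
    (hR_nonneg : ∀ n, ∀ t ∈ Icc 0 T, 0 ≤ R n t) (hR_le : ∀ n, ∀ t ∈ Icc 0 T, R n t ≤ M)
    (hε : Tendsto ε atTop (𝓝 0))
    (hRQ : ∀ t ∈ Icc 0 T, Tendsto (fun n => R n t) atTop (𝓝 (Q t)))
    (hineq : ∀ n, ∀ t ∈ Icc 0 T, R n t ≤ ε n + C * ∫ s in 0..t, G (R n s)) :
    ∀ t ∈ Icc 0 T, Q t ≤ C * ∫ s in 0..t, G (Q s) := by
  intro t ht
  have hsub : uIoc 0 t ⊆ Icc 0 T := by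
    rw [uIoc_of_le ht.1]
    exact Ioc_subset_Icc_self.trans (Icc_subset_Icc_right ht.2)
  have hdom : Tendsto (fun n => ∫ s in 0..t, G (R n s)) atTop (𝓝 (∫ s in 0..t, G (Q s))) :=
    tendsto_integral_filter_of_dominated_convergence (fun _ => G M)
      (.of_forall fun n => (hG_cont.measurable.comp (hR_meas n)).aestronglyMeasurable)
      (.of_forall fun n => ae_of_all _ fun s hs => by
        have hRs := hR_nonneg n s (hsub hs)
        rw [Real.norm_of_nonneg (hG_nonneg _ hRs)]
        exact hG_mono hRs (hRs.trans (hR_le n s (hsub hs))) (hR_le n s (hsub hs)))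
      intervalIntegrable_const
      (ae_of_all _ fun s hs => (hG_cont.tendsto _).comp (hRQ s (hsub hs)))
  have hlim := hε.add (hdom.const_mul C)
  rw [zero_add] at hlim
  exact le_of_tendsto_of_tendsto' (hRQ t ht) hlim fun n => hineq n t ht

theorem integrableOn_comp_of_mapsTo_Icc (hG_nonneg : ∀ x, 0 ≤ x → 0 ≤ G x) {u : ℝ → ℝ}
    {a b M : ℝ} (hu_meas : Measurable u) (hu : MapsTo u (Icc a b) (Icc 0 M)) :
    IntegrableOn (fun t => G (u t)) (Icc a b) := by
  refine Measure.integrableOn_of_bounded (M := G M) measure_Icc_lt_top.ne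
    (hG_cont.measurable.comp hu_meas).aestronglyMeasurable ?_
  filter_upwards [ae_restrict_mem measurableSet_Icc] with t ht
  obtain ⟨hu0, huM⟩ := hu ht
  rw [Real.norm_of_nonneg (hG_nonneg _ hu0)]
  exact hG_mono hu0 (hu0.trans huM) huM

end Osgood

theorem stmt8_general (T : ℝ) (R : ℕ → ℝ → ℝ)
    (hR_meas : ∀ n, Measurable (R n))
    (hR_nonneg : ∀ n, ∀ t ∈ Icc (0:ℝ) T, 0 ≤ R n t)
    (hR_bdd : ∃ M : ℝ, ∀ n, ∀ t ∈ Icc (0:ℝ) T, R n t ≤ M)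
    (hR_anti : ∀ t ∈ Icc (0:ℝ) T, ∀ m n : ℕ, m ≤ n → R n t ≤ R m t)
    (ε : ℕ → ℝ)
    (hε_lim : Filter.Tendsto ε Filter.atTop (nhds 0))
    (G : ℝ → ℝ) (hG_cont : Continuous G)
    (hG_mono : ∀ ⦃x y : ℝ⦄, 0 ≤ x → x ≤ y → G x ≤ G y)
    (hG_nonneg : ∀ x, 0 ≤ x → 0 ≤ G x)
    (hOsgood : ∀ η : ℝ, 0 < η →
      Filter.Tendsto (fun δ : ℝ => ∫ z in δ..η, 1 / G z)
        (nhdsWithin 0 (Ioi 0)) Filter.atTop)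
    (hineq : ∀ n, ∀ t ∈ Icc (0:ℝ) T, R n t ≤ ε n + 6 * ∫ s in (0:ℝ)..t, G (R n s)) :
    ∀ t ∈ Icc (0:ℝ) T, Filter.Tendsto (fun n => R n t) Filter.atTop (nhds 0) := by
  obtain ⟨M, hR_le⟩ := hR_bdd
  have hG_mono' : MonotoneOn G (Ici 0) := fun x hx _ _ hxy => hG_mono hx hxy
  have hbdd : ∀ t ∈ Icc 0 T, BddBelow (range fun n => R n t) := fun t ht =>
    ⟨0, forall_mem_range.2 fun n => hR_nonneg n t ht⟩
  set Q : ℝ → ℝ := fun t => ⨅ n, R n t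
  have hRQ : ∀ t ∈ Icc 0 T, Tendsto (fun n => R n t) atTop (𝓝 (Q t)) := fun t ht =>
    tendsto_atTop_ciInf (fun m n hmn => hR_anti t ht m n hmn) (hbdd t ht)
  have hQ_mem : MapsTo Q (Icc 0 T) (Icc 0 M) := fun t ht =>
    ⟨le_ciInf fun n => hR_nonneg n t ht, (ciInf_le (hbdd t ht) 0).trans (hR_le 0 t ht)⟩
  have hQ_zero : EqOn Q 0 (Icc 0 T) :=
    eqOn_zero_of_le_mul_integral hG_cont hG_mono' hG_nonneg hOsgood (by norm_num)
      (fun t ht => (hQ_mem ht).1)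
      (integrableOn_comp_of_mapsTo_Icc hG_cont hG_mono' hG_nonneg (.iInf hR_meas) hQ_mem)
      (le_mul_integral_of_tendsto hG_cont hG_mono' hG_nonneg hR_meas hR_nonneg hR_le hε_lim
        hRQ hineq)
  intro t ht
  simpa [hQ_zero ht] using hRQ t ht

/-- If `Rₙ : [0,T] → ℝ≥0` are bounded measurable, non-increasing in `n` pointwise,
with `Rₙ(t) ≤ εₙ + 6 ∫_0^t G(Rₙ(s)) ds`, `εₙ → 0`, and `G` continuous, non-decreasing,
concave, `G 0 = 0`, satisfying the Osgood condition, then `Rₙ(t) → 0` for every `t`. -/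
theorem stmt8 (T : ℝ) (hT : 0 < T) (R : ℕ → ℝ → ℝ)
    (hR_meas : ∀ n, Measurable (R n))
    (hR_nonneg : ∀ n, ∀ t ∈ Icc (0:ℝ) T, 0 ≤ R n t)
    (hR_bdd : ∃ M : ℝ, ∀ n, ∀ t ∈ Icc (0:ℝ) T, R n t ≤ M)
    (hR_anti : ∀ t ∈ Icc (0:ℝ) T, ∀ m n : ℕ, m ≤ n → R n t ≤ R m t)
    (ε : ℕ → ℝ) (hε_nonneg : ∀ n, 0 ≤ ε n)
    (hε_lim : Filter.Tendsto ε Filter.atTop (nhds 0))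
    (G : ℝ → ℝ) (hG_cont : Continuous G)
    (hG_mono : ∀ ⦃x y : ℝ⦄, 0 ≤ x → x ≤ y → G x ≤ G y)
    (hG_conc : ConcaveOn ℝ (Ici 0) G) (hG0 : G 0 = 0)
    (hG_nonneg : ∀ x, 0 ≤ x → 0 ≤ G x)
    (hOsgood : ∀ η : ℝ, 0 < η →
      Filter.Tendsto (fun δ : ℝ => ∫ z in δ..η, 1 / G z)
        (nhdsWithin 0 (Ioi 0)) Filter.atTop)
    (hineq : ∀ n, ∀ t ∈ Icc (0:ℝ) T, R n t ≤ ε n + 6 * ∫ s in (0:ℝ)..t, G (R n s)) :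
    ∀ t ∈ Icc (0:ℝ) T, Filter.Tendsto (fun n => R n t) Filter.atTop (nhds 0) :=
  stmt8_general T R hR_meas hR_nonneg hR_bdd hR_anti ε hε_lim G hG_cont hG_mono hG_nonneg hOsgood
    hineq
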